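/- arXiv:1311.6367 — 6 statements merged into one kernel-verified Lean document; each statement's English description precedes it below -/
import Mathlib

section
/- Let (P_μ)_{μ∈𝒫(E)} be a nonlinear Markov transition kernel family on a measurable space (E,ℰ) satisfying the global nonlinear Dobrushin condition with constant α ∈ (0,1] and the measure-Lipschitz condition with constant λ, where 0 ≤ λ ≤ α. Then there exists a unique probability measure π ∈ 𝒫(E) with P_π π = π. -/
open MeasureTheory ProbabilityTheory

/-- Total variation distance between (finite) measures:
`d_TV(μ,ν) = 2 ⨆_{A measurable} |μ(A) − ν(A)|`. -/
noncomputable def dTV {E : Type*} [MeasurableSpace E] (μ ν : Measure E) : ℝ :=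
  2 * ⨆ A : {A : Set E // MeasurableSet A}, |(μ A.1).toReal - (ν A.1).toReal|

/-!
Write `Φ μ = P_μ μ` and `d = d_TV(μ, ν)`. A Hahn decomposition splits two probability measures
into a common part of mass `1 - d/2` plus parts of mass `d/2` each. The measure-Lipschitz condition
controls `Φ` on the common part and the Dobrushin condition on the rest, so that
`d_TV(Φ μ, Φ ν) ≤ λ d (1 - d/2) + (1 - α) d ≤ d - α d²/2` because `λ ≤ α`. Iterating gives
`d_TV(Φⁿ μ, Φⁿ ν) ≤ 2 / (1 + α n)` uniformly in `μ, ν`. Hence `Φⁿ δₓ` is Cauchy for `d_TV`; its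
limit exists because uniform setwise limits of measures are measures, it is fixed by `Φ` since
`Φ` is non-expansive, and two fixed points are within `2 / (1 + α n)` of each other for all `n`.
-/

open Filter Function Topology Set

section TotalVariation

variable {E : Type*} [MeasurableSpace E] {μ ν ξ : Measure E}

lemma dTV_eq_two_mul_iSup (μ ν : Measure E) :
    dTV μ ν = 2 * ⨆ A : {A : Set E // MeasurableSet A}, |μ.real A - ν.real A| := rfl

lemma bddAbove_abs_measureReal_sub (μ ν : Measure E) [IsFiniteMeasure μ] [IsFiniteMeasure ν] :
    BddAbove (range fun A : {A : Set E // MeasurableSet A} => |μ.real A - ν.real A|) := by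
  refine ⟨μ.real univ + ν.real univ, ?_⟩
  rintro _ ⟨A, rfl⟩
  exact (abs_sub _ _).trans <| by
    rw [abs_of_nonneg measureReal_nonneg, abs_of_nonneg measureReal_nonneg]
    exact add_le_add (measureReal_mono (subset_univ _)) (measureReal_mono (subset_univ _))

lemma abs_measureReal_sub_le_dTV [IsFiniteMeasure μ] [IsFiniteMeasure ν] {A : Set E}
    (hA : MeasurableSet A) : |μ.real A - ν.real A| ≤ dTV μ ν / 2 := by
  have := le_ciSup (bddAbove_abs_measureReal_sub μ ν) ⟨A, hA⟩
  rw [dTV_eq_two_mul_iSup]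
  linarith

lemma dTV_le_of_forall {c : ℝ} (h : ∀ A, MeasurableSet A → |μ.real A - ν.real A| ≤ c) :
    dTV μ ν ≤ 2 * c := by
  have : Nonempty {A : Set E // MeasurableSet A} := ⟨⟨∅, .empty⟩⟩
  rw [dTV_eq_two_mul_iSup]
  gcongr
  exact ciSup_le fun A => h A.1 A.2

lemma dTV_comm (μ ν : Measure E) : dTV μ ν = dTV ν μ := by
  simp only [dTV_eq_two_mul_iSup, abs_sub_comm]

lemma dTV_nonneg [IsFiniteMeasure μ] [IsFiniteMeasure ν] : 0 ≤ dTV μ ν := by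
  linarith [abs_nonneg (μ.real ∅ - ν.real ∅), abs_measureReal_sub_le_dTV (μ := μ) (ν := ν) .empty]

lemma dTV_le_two [IsProbabilityMeasure μ] [IsProbabilityMeasure ν] : dTV μ ν ≤ 2 := by
  have h := dTV_le_of_forall (μ := μ) (ν := ν) (c := 1) fun A _ => by
    rw [abs_sub_le_iff]
    constructor <;> linarith [measureReal_le_one (μ := μ) (s := A),
      measureReal_le_one (μ := ν) (s := A), measureReal_nonneg (μ := μ) (s := A),
      measureReal_nonneg (μ := ν) (s := A)]
  linarith

lemma dTV_triangle [IsFiniteMeasure μ] [IsFiniteMeasure ν] [IsFiniteMeasure ξ] :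
    dTV μ ξ ≤ dTV μ ν + dTV ν ξ := by
  have h := dTV_le_of_forall (μ := μ) (ν := ξ) (c := dTV μ ν / 2 + dTV ν ξ / 2) fun A hA =>
    (abs_sub_le _ (ν.real A) _).trans
      (add_le_add (abs_measureReal_sub_le_dTV hA) (abs_measureReal_sub_le_dTV hA))
  linarith

lemma eq_of_forall_dTV_le [IsFiniteMeasure μ] [IsFiniteMeasure ν] {ι : Type*} {l : Filter ι}
    [l.NeBot] {δ : ι → ℝ} (hδ : Tendsto δ l (𝓝 0)) (h : ∀ i, dTV μ ν ≤ δ i) : μ = ν := by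
  have h0 : dTV μ ν ≤ 0 := ge_of_tendsto hδ (Eventually.of_forall h)
  ext A hA
  rw [← measureReal_eq_measureReal_iff, ← sub_eq_zero, ← abs_nonpos_iff]
  linarith [abs_measureReal_sub_le_dTV (μ := μ) (ν := ν) hA]

end TotalVariation

section SetwiseLimit

variable {E : Type*} [MeasurableSpace E] {μ : ℕ → Measure E} [∀ n, IsFiniteMeasure (μ n)]
  {r : Set E → ℝ}

lemma hasSum_measureReal_iUnion (ν : Measure E) [IsFiniteMeasure ν] {f : ℕ → Set E}
    (hf : ∀ i, MeasurableSet (f i)) (hd : Pairwise (Disjoint on f)) :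
    HasSum (fun i => ν.real (f i)) (ν.real (⋃ i, f i)) := by
  have h := measure_iUnion (μ := ν) hd hf
  rw [measureReal_def, h, ENNReal.tsum_toReal_eq fun i => measure_ne_top _ _]
  exact ENNReal.hasSum_toReal (h ▸ measure_ne_top _ _)

lemma hasSum_of_tendstoUniformlyOn_measureReal
    (hr : TendstoUniformlyOn (fun n A => (μ n).real A) r atTop {A | MeasurableSet A})
    {f : ℕ → Set E} (hf : ∀ i, MeasurableSet (f i)) (hd : Pairwise (Disjoint on f)) :
    HasSum (fun i => r (f i)) (r (⋃ i, f i)) := by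
  have hlim : ∀ A, MeasurableSet A → Tendsto (fun n => (μ n).real A) atTop (𝓝 (r A)) :=
    fun A hA => hr.tendsto_at hA
  set S : ℕ → Set E := fun k => ⋃ i ∈ Finset.range k, f i
  have hS : ∀ k, MeasurableSet (S k) := fun k => Finset.measurableSet_biUnion _ fun i _ => hf i
  have hμS : ∀ n k, (μ n).real (S k) = ∑ i ∈ Finset.range k, (μ n).real (f i) := fun n k =>
    measureReal_biUnion_finset (hd.set_pairwise _) fun i _ => hf i
  have hrS : ∀ k, r (S k) = ∑ i ∈ Finset.range k, r (f i) := fun k => by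
    refine tendsto_nhds_unique (hlim _ (hS k)) ?_
    simp_rw [hμS]
    exact tendsto_finsetSum _ fun i _ => hlim _ (hf i)
  rw [hasSum_iff_tendsto_nat_of_nonneg
    (fun i => ge_of_tendsto' (hlim _ (hf i)) fun _ => measureReal_nonneg)]
  simp_rw [← hrS]
  -- Moore–Osgood: the limit in `n`, which is uniform in `k`, commutes with the limit in `k`.
  refine TendstoUniformly.tendsto_of_eventually_tendsto (F := fun n k => (μ n).real (S k))
    (tendstoUniformlyOn_univ.1 ((hr.comp S).mono fun k _ => hS k))
    (Eventually.of_forall fun n => ?_) (hlim _ (.iUnion hf))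
  simp_rw [hμS]
  exact (hasSum_measureReal_iUnion (μ n) hf hd).tendsto_sum_nat

lemma exists_measureReal_eq_of_tendstoUniformlyOn
    (hr : TendstoUniformlyOn (fun n A => (μ n).real A) r atTop {A | MeasurableSet A}) :
    ∃ π : Measure E, IsFiniteMeasure π ∧ ∀ A, MeasurableSet A → π.real A = r A := by
  have hlim : ∀ A, MeasurableSet A → Tendsto (fun n => (μ n).real A) atTop (𝓝 (r A)) :=
    fun A hA => hr.tendsto_at hA
  have hr0 : ∀ A, MeasurableSet A → 0 ≤ r A := fun A hA =>
    ge_of_tendsto' (hlim A hA) fun _ => measureReal_nonneg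
  have hempty : r ∅ = 0 := tendsto_nhds_unique (hlim ∅ .empty) (by simp)
  let π : Measure E := Measure.ofMeasurable (fun A _ => ENNReal.ofReal (r A))
    (by simp [hempty]) fun f hf hd => by
      rw [(hasSum_of_tendstoUniformlyOn_measureReal hr hf hd).tsum_eq.symm,
        ENNReal.ofReal_tsum_of_nonneg (fun i => hr0 _ (hf i))
          (hasSum_of_tendstoUniformlyOn_measureReal hr hf hd).summable]
  have hπ : ∀ A, MeasurableSet A → π A = ENNReal.ofReal (r A) := fun A hA =>
    Measure.ofMeasurable_apply A hA
  refine ⟨π, ⟨by simp [hπ _ .univ]⟩, fun A hA => ?_⟩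
  rw [measureReal_def, hπ A hA, ENNReal.toReal_ofReal (hr0 A hA)]

end SetwiseLimit

lemma exists_dTV_le_of_dTV_le {E : Type*} [MeasurableSpace E] (μ : ℕ → Measure E)
    [∀ n, IsProbabilityMeasure (μ n)] {δ : ℕ → ℝ} (hδ : Tendsto δ atTop (𝓝 0))
    (hμ : ∀ n m, n ≤ m → dTV (μ n) (μ m) ≤ δ n) :
    ∃ π : Measure E, IsProbabilityMeasure π ∧ ∀ n, dTV (μ n) π ≤ δ n := by
  have hset : ∀ A, MeasurableSet A → ∀ n m, n ≤ m → |(μ n).real A - (μ m).real A| ≤ δ n / 2 :=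
    fun A hA n m hnm => (abs_measureReal_sub_le_dTV hA).trans (by linarith [hμ n m hnm])
  have hcauchy : ∀ A, MeasurableSet A → CauchySeq fun n => (μ n).real A := fun A hA =>
    cauchySeq_of_le_tendsto_0 δ (fun n m N hn hm => by
      rw [Real.dist_eq]
      calc |(μ n).real A - (μ m).real A|
          ≤ |(μ n).real A - (μ N).real A| + |(μ N).real A - (μ m).real A| := abs_sub_le _ _ _
        _ ≤ δ N := by
          rw [abs_sub_comm]
          linarith [hset A hA N n hn, hset A hA N m hm]) hδ
  set r : Set E → ℝ := fun A => limUnder atTop fun n => (μ n).real A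
  have hr : ∀ A, MeasurableSet A → ∀ n, |(μ n).real A - r A| ≤ δ n / 2 := fun A hA n =>
    le_of_tendsto (((hcauchy A hA).tendsto_limUnder.const_sub _).abs)
      (eventually_ge_atTop n |>.mono fun m hm => hset A hA n m hm)
  have hunif : TendstoUniformlyOn (fun n A => (μ n).real A) r atTop {A | MeasurableSet A} := by
    refine Metric.tendstoUniformlyOn_iff.2 fun ε hε => ?_
    filter_upwards [(hδ.div_const 2).eventually (gt_mem_nhds (by simpa using hε))] with n hn A hA
    rw [Real.dist_eq, abs_sub_comm]
    exact (hr A hA n).trans_lt hn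
  obtain ⟨π, -, hπ⟩ := exists_measureReal_eq_of_tendstoUniformlyOn hunif
  have hπuniv : π.real univ = 1 := by
    rw [hπ _ .univ]
    exact tendsto_nhds_unique (hcauchy _ .univ).tendsto_limUnder (by simp)
  have : IsProbabilityMeasure π := ⟨(ENNReal.toReal_eq_one_iff _).1 hπuniv⟩
  refine ⟨π, this, fun n => ?_⟩
  have := dTV_le_of_forall (μ := μ n) (ν := π) fun A hA => (hπ A hA).symm ▸ hr A hA n
  linarith

section Coupling

variable {E : Type*} [MeasurableSpace E] {μ ν : Measure E} {S : Set E}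

lemma measureReal_sub_le_of_isHahn [IsFiniteMeasure μ] [IsFiniteMeasure ν]
    (hS : MeasurableSet S) (hpos : ∀ t, MeasurableSet t → t ⊆ S → ν t ≤ μ t)
    (hneg : ∀ t, MeasurableSet t → t ⊆ Sᶜ → μ t ≤ ν t) {A : Set E} (hA : MeasurableSet A) :
    μ.real A - ν.real A ≤ μ.real S - ν.real S := by
  have hout : μ.real (A \ S) ≤ ν.real (A \ S) := ENNReal.toReal_mono (measure_ne_top _ _)
    (hneg _ (hA.diff hS) fun _ hx => hx.2)
  have hin : ν.real (S \ A) ≤ μ.real (S \ A) := ENNReal.toReal_mono (measure_ne_top _ _)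
    (hpos _ (hS.diff hA) sdiff_subset)
  rw [← measureReal_inter_add_sdiff (μ := μ) (s := A) hS, ← measureReal_inter_add_sdiff
    (μ := ν) (s := A) hS, ← measureReal_inter_add_sdiff (μ := μ) (s := S) hA,
    ← measureReal_inter_add_sdiff (μ := ν) (s := S) hA, inter_comm S A]
  linarith

lemma dTV_eq_of_isHahn [IsProbabilityMeasure μ] [IsProbabilityMeasure ν]
    (hS : MeasurableSet S) (hpos : ∀ t, MeasurableSet t → t ⊆ S → ν t ≤ μ t)
    (hneg : ∀ t, MeasurableSet t → t ⊆ Sᶜ → μ t ≤ ν t) :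
    dTV μ ν = 2 * (μ.real S - ν.real S) := by
  refine le_antisymm (dTV_le_of_forall fun A hA => abs_sub_le_iff.2 ⟨?_, ?_⟩) ?_
  · exact measureReal_sub_le_of_isHahn hS hpos hneg hA
  · have := measureReal_sub_le_of_isHahn hS.compl hneg (by simpa using hpos) hA
    rw [probReal_compl_eq_one_sub hS, probReal_compl_eq_one_sub hS] at this
    linarith
  · linarith [le_abs_self (μ.real S - ν.real S), abs_measureReal_sub_le_dTV (μ := μ) (ν := ν) hS]

lemma exists_eq_add_common_part (μ ν : Measure E) [IsProbabilityMeasure μ]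
    [IsProbabilityMeasure ν] : ∃ κ₁ κ₂ ρ : Measure E, μ = κ₁ + ρ ∧ ν = κ₂ + ρ ∧
      κ₁.real univ = dTV μ ν / 2 ∧ κ₂.real univ = dTV μ ν / 2 := by
  obtain ⟨S, hS, hpos, hneg⟩ := hahn_decomposition μ ν
  have hle₁ : ν.restrict S ≤ μ.restrict S := Measure.le_iff.2 fun A hA => by
    simp only [Measure.restrict_apply hA]
    exact hpos _ (hA.inter hS) inter_subset_right
  have hle₂ : μ.restrict Sᶜ ≤ ν.restrict Sᶜ := Measure.le_iff.2 fun A hA => by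
    simp only [Measure.restrict_apply hA]
    exact hneg _ (hA.inter hS.compl) inter_subset_right
  have e₁ := Measure.sub_add_cancel_of_le hle₁
  have e₂ := Measure.sub_add_cancel_of_le hle₂
  have hd := dTV_eq_of_isHahn hS hpos hneg
  refine ⟨μ.restrict S - ν.restrict S, ν.restrict Sᶜ - μ.restrict Sᶜ,
    ν.restrict S + μ.restrict Sᶜ, ?_, ?_, ?_, ?_⟩
  · rw [← add_assoc, e₁, Measure.restrict_add_restrict_compl hS]
  · rw [add_comm (ν.restrict S), ← add_assoc, e₂, add_comm, Measure.restrict_add_restrict_compl hS]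
  · have := congrArg (fun κ : Measure E => κ.real univ) e₁
    rw [measureReal_add_apply, measureReal_restrict_apply_univ,
      measureReal_restrict_apply_univ] at this
    linarith
  · have := congrArg (fun κ : Measure E => κ.real univ) e₂
    rw [measureReal_add_apply, measureReal_restrict_apply_univ, measureReal_restrict_apply_univ,
      probReal_compl_eq_one_sub hS, probReal_compl_eq_one_sub hS] at this
    linarith

end Coupling

section Integrals

variable {E : Type*} [MeasurableSpace E] [Nonempty E]

lemma integral_sub_integral_le_of_forall_sub_le {κ₁ κ₂ : Measure E} [IsFiniteMeasure κ₁]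
    [IsFiniteMeasure κ₂] (hmass : κ₁.real univ = κ₂.real univ) {f g : E → ℝ}
    (hf : Integrable f κ₁) (hg : Integrable g κ₂) {β : ℝ} (h : ∀ x y, f x - g y ≤ β) :
    ∫ x, f x ∂κ₁ - ∫ x, g x ∂κ₂ ≤ β * κ₁.real univ := by
  obtain ⟨x₀⟩ := ‹Nonempty E›
  have hbdd : BddBelow (range g) := ⟨f x₀ - β, by rintro _ ⟨y, rfl⟩; linarith [h x₀ y]⟩
  set c := ⨅ y, g y
  have hf_le : ∀ x, f x ≤ c + β := fun x => by
    linarith [le_ciInf fun y => (by linarith [h x y] : f x - β ≤ g y)]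
  have h₁ : ∫ x, f x ∂κ₁ ≤ ∫ _, c + β ∂κ₁ := integral_mono hf (integrable_const _) hf_le
  have h₂ : ∫ _, c ∂κ₂ ≤ ∫ x, g x ∂κ₂ :=
    integral_mono (integrable_const _) hg fun y => ciInf_le hbdd y
  simp only [integral_const, smul_eq_mul, ← hmass] at h₁ h₂
  linarith

lemma abs_integral_sub_integral_le (μ ν : Measure E) [IsProbabilityMeasure μ]
    [IsProbabilityMeasure ν] {f g : E → ℝ} (hf : Integrable f μ) (hg : Integrable g ν)
    {c β : ℝ} (hc : ∀ x, |f x - g x| ≤ c) (hβ : ∀ x y, |f x - g y| ≤ β) :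
    |∫ x, f x ∂μ - ∫ x, g x ∂ν| ≤ c * (1 - dTV μ ν / 2) + β * (dTV μ ν / 2) := by
  obtain ⟨κ₁, κ₂, ρ, hμ, hν, hκ₁, hκ₂⟩ := exists_eq_add_common_part μ ν
  set t := dTV μ ν / 2
  have hκ₁μ : κ₁ ≤ μ := hμ ▸ Measure.le_add_right le_rfl
  have hκ₂ν : κ₂ ≤ ν := hν ▸ Measure.le_add_right le_rfl
  have hρμ : ρ ≤ μ := hμ ▸ Measure.le_add_left le_rfl
  have hρν : ρ ≤ ν := hν ▸ Measure.le_add_left le_rfl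
  have := isFiniteMeasure_of_le μ hκ₁μ
  have := isFiniteMeasure_of_le ν hκ₂ν
  have := isFiniteMeasure_of_le μ hρμ
  have hρ : ρ.real univ = 1 - t := by
    have := congrArg (fun κ : Measure E => κ.real univ) hμ
    simp only [probReal_univ] at this
    rw [measureReal_add_apply] at this
    linarith
  have hcommon : |∫ x, f x ∂ρ - ∫ x, g x ∂ρ| ≤ c * (1 - t) := by
    rw [← integral_sub (hf.mono_measure hρμ) (hg.mono_measure hρν), ← hρ]
    exact norm_integral_le_of_norm_le_const
      (ae_of_all _ fun x => (Real.norm_eq_abs _).trans_le (hc x))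
  have h₁ := integral_sub_integral_le_of_forall_sub_le (hκ₁.trans hκ₂.symm)
    (hf.mono_measure hκ₁μ) (hg.mono_measure hκ₂ν) fun x y => (abs_le.1 (hβ x y)).2
  have h₂ := integral_sub_integral_le_of_forall_sub_le (hκ₂.trans hκ₁.symm)
    (hg.mono_measure hκ₂ν) (hf.mono_measure hκ₁μ) fun y x => by linarith [(abs_le.1 (hβ x y)).1]
  rw [hμ, hν, integral_add_measure (hf.mono_measure hκ₁μ) (hf.mono_measure hρμ),
    integral_add_measure (hg.mono_measure hκ₂ν) (hg.mono_measure hρν)]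
  rw [hκ₁] at h₁
  rw [hκ₂] at h₂
  rw [abs_le] at hcommon ⊢
  constructor <;> linarith

end Integrals

section NonlinearKernel

variable {E : Type*} [MeasurableSpace E]

def NonlinearDobrushin (P : Measure E → Kernel E E) (α : ℝ) : Prop :=
  ∀ μ ν : Measure E, IsProbabilityMeasure μ → IsProbabilityMeasure ν →
    ∀ x y : E, dTV (P μ x) (P ν y) ≤ 2 * (1 - α)

def MeasureLipschitz (P : Measure E → Kernel E E) (lam : ℝ) : Prop :=
  ∀ μ ν : Measure E, IsProbabilityMeasure μ → IsProbabilityMeasure ν →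
    ∀ x : E, dTV (P μ x) (P ν x) ≤ lam * dTV μ ν

noncomputable abbrev nonlinearStep (P : Measure E → Kernel E E) (μ : Measure E) : Measure E :=
  P μ ∘ₘ μ

lemma ProbabilityTheory.Kernel.integrable_measureReal (κ : Kernel E E) [IsMarkovKernel κ]
    (μ : Measure E) [IsFiniteMeasure μ] {A : Set E} (hA : MeasurableSet A) :
    Integrable (fun x => (κ x).real A) μ :=
  .of_bound (κ.measurable_coe hA).ennreal_toReal.aestronglyMeasurable 1
    (ae_of_all _ fun x => by
      rw [Real.norm_eq_abs, abs_of_nonneg measureReal_nonneg]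
      exact measureReal_le_one)

lemma ProbabilityTheory.Kernel.comp_measureReal_apply (κ : Kernel E E) [IsFiniteKernel κ]
    (μ : Measure E) {A : Set E} (hA : MeasurableSet A) :
    (κ ∘ₘ μ).real A = ∫ x, (κ x).real A ∂μ := by
  rw [measureReal_def, Measure.bind_apply hA κ.aemeasurable,
    ← integral_toReal (κ.measurable_coe hA).aemeasurable (ae_of_all _ fun x => measure_lt_top _ _)]
  rfl

variable {P : Measure E → Kernel E E} [∀ μ, IsMarkovKernel (P μ)] {α lam : ℝ}

lemma isProbabilityMeasure_iterate_nonlinearStep (k : ℕ) (μ : Measure E)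
    [IsProbabilityMeasure μ] : IsProbabilityMeasure ((nonlinearStep P)^[k] μ) := by
  induction k with
  | zero => assumption
  | succ k ih => rw [Function.iterate_succ_apply']; infer_instance

lemma dTV_nonlinearStep_le [Nonempty E] (hD : NonlinearDobrushin P α)
    (hL : MeasureLipschitz P lam) (hlam : lam ≤ α) (μ ν : Measure E) [IsProbabilityMeasure μ]
    [IsProbabilityMeasure ν] :
    dTV (nonlinearStep P μ) (nonlinearStep P ν) ≤ dTV μ ν - α * dTV μ ν ^ 2 / 2 := by
  set d := dTV μ ν
  have hset : ∀ A, MeasurableSet A → |(nonlinearStep P μ).real A - (nonlinearStep P ν).real A|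
      ≤ lam * d / 2 * (1 - d / 2) + (1 - α) * (d / 2) := fun A hA => by
    rw [nonlinearStep, nonlinearStep, Kernel.comp_measureReal_apply _ _ hA,
      Kernel.comp_measureReal_apply _ _ hA]
    refine abs_integral_sub_integral_le μ ν ((P μ).integrable_measureReal μ hA)
      ((P ν).integrable_measureReal ν hA) (fun x => ?_) (fun x y => ?_)
    · linarith [abs_measureReal_sub_le_dTV (μ := P μ x) (ν := P ν x) hA, hL μ ν ‹_› ‹_› x]
    · linarith [abs_measureReal_sub_le_dTV (μ := P μ x) (ν := P ν y) hA, hD μ ν ‹_› ‹_› x y]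
  have hd₀ : 0 ≤ d := dTV_nonneg
  have hd₂ : d ≤ 2 := dTV_le_two
  have := dTV_le_of_forall hset
  nlinarith [mul_nonneg (mul_nonneg (sub_nonneg.2 hlam) hd₀) (sub_nonneg.2 hd₂)]

end NonlinearKernel

lemma sub_mul_sq_div_two_le_two_div {α u d : ℝ} (hα : 0 ≤ α) (hu : 0 ≤ u) (hd : 0 ≤ d)
    (hdu : d * (1 + u) ≤ 2) : d - α * d ^ 2 / 2 ≤ 2 / (1 + u + α) := by
  rw [le_div_iff₀ (by positivity)]
  nlinarith [sq_nonneg (α * d - (1 - d * (1 + u) / 2)),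
    mul_nonneg (sub_nonneg.2 hdu) (by positivity : (0 : ℝ) ≤ 6 + d * (1 + u))]

lemma tendsto_two_div_one_add_mul_atTop {α : ℝ} (hα : 0 < α) :
    Tendsto (fun n : ℕ => 2 / (1 + α * n)) atTop (𝓝 0) :=
  tendsto_const_nhds.div_atTop <|
    tendsto_atTop_add_const_left _ 1 <| tendsto_natCast_atTop_atTop.const_mul_atTop hα

section FixedPoint

variable {E : Type*} [MeasurableSpace E] [Nonempty E] {P : Measure E → Kernel E E}
  [∀ μ, IsMarkovKernel (P μ)] {α lam : ℝ}

lemma dTV_nonlinearStep_le_dTV (hD : NonlinearDobrushin P α) (hL : MeasureLipschitz P lam)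
    (hα : 0 ≤ α) (hlam : lam ≤ α) (μ ν : Measure E) [IsProbabilityMeasure μ]
    [IsProbabilityMeasure ν] : dTV (nonlinearStep P μ) (nonlinearStep P ν) ≤ dTV μ ν :=
  (dTV_nonlinearStep_le hD hL hlam μ ν).trans (sub_le_self _ (by positivity))

lemma dTV_iterate_nonlinearStep_le (hD : NonlinearDobrushin P α) (hL : MeasureLipschitz P lam)
    (hα : 0 ≤ α) (hlam : lam ≤ α) (k : ℕ) (μ ν : Measure E) [IsProbabilityMeasure μ]
    [IsProbabilityMeasure ν] :
    dTV ((nonlinearStep P)^[k] μ) ((nonlinearStep P)^[k] ν) ≤ 2 / (1 + α * k) := by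
  induction k with
  | zero => simpa using dTV_le_two
  | succ k ih =>
    have := isProbabilityMeasure_iterate_nonlinearStep (P := P) k μ
    have := isProbabilityMeasure_iterate_nonlinearStep (P := P) k ν
    rw [Function.iterate_succ_apply', Function.iterate_succ_apply']
    refine (dTV_nonlinearStep_le hD hL hlam _ _).trans <|
      (sub_mul_sq_div_two_le_two_div hα (by positivity) dTV_nonneg
        ((le_div_iff₀ (by positivity)).1 ih)).trans_eq ?_
    push_cast
    ring

lemma exists_isProbabilityMeasure_nonlinearStep_eq (hD : NonlinearDobrushin P α)
    (hL : MeasureLipschitz P lam) (hα : 0 < α) (hlam : lam ≤ α) :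
    ∃ π : Measure E, IsProbabilityMeasure π ∧ nonlinearStep P π = π := by
  set δ : ℕ → ℝ := fun n => 2 / (1 + α * n)
  have hδ : Tendsto δ atTop (𝓝 0) := tendsto_two_div_one_add_mul_atTop hα
  obtain ⟨x₀⟩ := ‹Nonempty E›
  set μs : ℕ → Measure E := fun n => (nonlinearStep P)^[n] (Measure.dirac x₀)
  have := fun n => isProbabilityMeasure_iterate_nonlinearStep (P := P) n (Measure.dirac x₀)
  obtain ⟨π, hπ, hμsπ⟩ := exists_dTV_le_of_dTV_le μs hδ fun n m hnm => by
    obtain ⟨j, rfl⟩ := Nat.exists_eq_add_of_le hnm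
    have h := dTV_iterate_nonlinearStep_le hD hL hα.le hlam n (Measure.dirac x₀)
      ((nonlinearStep P)^[j] (Measure.dirac x₀))
    rwa [← Function.iterate_add_apply] at h
  refine ⟨π, hπ, eq_of_forall_dTV_le (δ := fun n => δ n + δ (n + 1))
    (by simpa using hδ.add (hδ.comp (tendsto_add_atTop_nat 1))) fun n => ?_⟩
  calc dTV (nonlinearStep P π) π
      ≤ dTV (nonlinearStep P π) (nonlinearStep P (μs n)) + dTV (μs (n + 1)) π := by
        rw [show μs (n + 1) = nonlinearStep P (μs n) from Function.iterate_succ_apply' ..]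
        exact dTV_triangle
    _ ≤ dTV π (μs n) + dTV (μs (n + 1)) π := by
        grw [dTV_nonlinearStep_le_dTV hD hL hα.le hlam]
    _ ≤ δ n + δ (n + 1) := by
        rw [dTV_comm π]
        exact add_le_add (hμsπ n) (hμsπ (n + 1))

lemma eq_of_nonlinearStep_eq (hD : NonlinearDobrushin P α) (hL : MeasureLipschitz P lam)
    (hα : 0 < α) (hlam : lam ≤ α) {ξ π : Measure E} [IsProbabilityMeasure ξ]
    [IsProbabilityMeasure π] (hξ : nonlinearStep P ξ = ξ) (hπ : nonlinearStep P π = π) :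
    ξ = π :=
  eq_of_forall_dTV_le (tendsto_two_div_one_add_mul_atTop hα) fun k => by
    simpa [Function.iterate_fixed hξ, Function.iterate_fixed hπ]
      using dTV_iterate_nonlinearStep_le hD hL hα.le hlam k ξ π

end FixedPoint

theorem stmt0_general {E : Type*} [MeasurableSpace E] [Nonempty E]
    (P : Measure E → Kernel E E) (hMarkov : ∀ μ, IsMarkovKernel (P μ))
    (α lam : ℝ) (hα0 : 0 < α) (hlamα : lam ≤ α)
    (hDobr : ∀ μ ν : Measure E, IsProbabilityMeasure μ → IsProbabilityMeasure ν →
      ∀ x y : E, dTV ((P μ) x) ((P ν) y) ≤ 2 * (1 - α))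
    (hLip : ∀ μ ν : Measure E, IsProbabilityMeasure μ → IsProbabilityMeasure ν →
      ∀ x : E, dTV ((P μ) x) ((P ν) x) ≤ lam * dTV μ ν) :
    ∃! π : Measure E, IsProbabilityMeasure π ∧ π.bind ⇑(P π) = π := by
  have : ∀ μ, IsMarkovKernel (P μ) := hMarkov
  obtain ⟨π, hπ, hfix⟩ := exists_isProbabilityMeasure_nonlinearStep_eq hDobr hLip hα0 hlamα
  exact ⟨π, ⟨hπ, hfix⟩, fun ξ ⟨hξ, hξfix⟩ => eq_of_nonlinearStep_eq hDobr hLip hα0 hlamα hξfix hfix⟩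

/-- A nonlinear Markov kernel family satisfying the global nonlinear Dobrushin condition
with constant `α ∈ (0,1]` and the measure-Lipschitz condition with constant `lam`,
`0 ≤ lam ≤ α`, has a unique invariant probability measure. -/
theorem stmt0 {E : Type*} [MeasurableSpace E] [Nonempty E]
    (P : Measure E → Kernel E E) (hMarkov : ∀ μ, IsMarkovKernel (P μ))
    (α lam : ℝ) (hα0 : 0 < α) (hα1 : α ≤ 1) (hlam0 : 0 ≤ lam) (hlamα : lam ≤ α)
    (hDobr : ∀ μ ν : Measure E, IsProbabilityMeasure μ → IsProbabilityMeasure ν →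
      ∀ x y : E, dTV ((P μ) x) ((P ν) y) ≤ 2 * (1 - α))
    (hLip : ∀ μ ν : Measure E, IsProbabilityMeasure μ → IsProbabilityMeasure ν →
      ∀ x : E, dTV ((P μ) x) ((P ν) x) ≤ lam * dTV μ ν) :
    ∃! π : Measure E, IsProbabilityMeasure π ∧ π.bind ⇑(P π) = π :=
  stmt0_general P hMarkov α lam hα0 hlamα hDobr hLip
end

section
/- Fix γ ∈ (0,1) and consider the nonlinear Markov chain on E = {1,2} with transition kernel P_ν(i,1) = (ν({2}) ∧ (1 − γ/2)) ∨ (γ/2) and P_ν(i,2) = (ν({1}) ∧ (1 − γ/2)) ∨ (γ/2) for i = 1,2. For a ∈ [γ/2, 1 − γ/2] let μ₀(a) = a δ₁ + (1 − a) δ₂ and define μ_{n+1} = P_{μ_n} μ_n. Then μ_n = a δ₁ + (1 − a) δ₂ for even n and μ_n = (1 − a) δ₁ + a δ₂ for odd n. Consequently, if a ≠ 1/2, then μ_n does not converge to the stationary measure π = (δ₁ + δ₂)/2 as n → ∞ (in particular d_TV(μ_n, π) = |2a − 1| for all n). -/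
open MeasureTheory ProbabilityTheory
open scoped ENNReal

/-! The kernel `P_ν` does not depend on the current state, so one step maps `ν` to the
law `P_ν(i, ·)`. Inside `[γ/2, 1 - γ/2]` the truncations are inactive, so this law is `ν` with the
two points swapped: the marginals alternate between `a δ₁ + (1-a) δ₂` and `(1-a) δ₁ + a δ₂`, both at
total variation distance `|2a - 1|` from `π`. -/

lemma Fin.set_two_cases (A : Set (Fin 2)) :
    A = ∅ ∨ A = {0} ∨ A = {1} ∨ A = Set.univ := by
  by_cases h0 : (0 : Fin 2) ∈ A <;> by_cases h1 : (1 : Fin 2) ∈ A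
  · refine Or.inr (Or.inr (Or.inr ?_)); ext x; fin_cases x <;> simp [h0, h1]
  · refine Or.inr (Or.inl ?_); ext x; fin_cases x <;> simp [h0, h1]
  · refine Or.inr (Or.inr (Or.inl ?_)); ext x; fin_cases x <;> simp [h0, h1]
  · refine Or.inl ?_; ext x; fin_cases x <;> simp [h0, h1]

lemma MeasureTheory.Measure.bind_of_forall_eq {α β : Type*} [MeasurableSpace α] [MeasurableSpace β]
    {μ : Measure α} [IsProbabilityMeasure μ] {κ : Kernel α β} {ν : Measure β}
    (hκ : ∀ a, κ a = ν) : μ.bind κ = ν := by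
  rw [show ⇑κ = fun _ ↦ ν from funext hκ, Measure.bind_const, measure_univ, one_smul]

/-- `b δ₀ + (1 - b) δ₁`; the points `1, 2` of the paper are `0, 1 : Fin 2`. -/
noncomputable def twoPoint (b : ℝ) : Measure (Fin 2) :=
  ENNReal.ofReal b • Measure.dirac 0 + ENNReal.ofReal (1 - b) • Measure.dirac 1

@[simp]
lemma twoPoint_apply_zero (b : ℝ) : twoPoint b {0} = ENNReal.ofReal b := by
  simp [twoPoint]

@[simp]
lemma twoPoint_apply_one (b : ℝ) : twoPoint b {1} = ENNReal.ofReal (1 - b) := by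
  simp [twoPoint]

lemma isProbabilityMeasure_twoPoint {b : ℝ} (hb0 : 0 ≤ b) (hb1 : b ≤ 1) :
    IsProbabilityMeasure (twoPoint b) := by
  constructor
  simp [twoPoint, ← ENNReal.ofReal_add hb0 (sub_nonneg.mpr hb1)]

lemma twoPoint_one_half :
    twoPoint (1 / 2) = (2 : ℝ≥0∞)⁻¹ • (Measure.dirac 0 + Measure.dirac 1) := by
  rw [twoPoint, smul_add, show (1 : ℝ) - 1 / 2 = 1 / 2 by norm_num, one_div,
    ENNReal.ofReal_inv_of_pos two_pos, ENNReal.ofReal_ofNat]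

lemma dTV_twoPoint_twoPoint {b c : ℝ} (hb0 : 0 ≤ b) (hb1 : b ≤ 1) (hc0 : 0 ≤ c) (hc1 : c ≤ 1) :
    dTV (twoPoint b) (twoPoint c) = 2 * |b - c| := by
  have := isProbabilityMeasure_twoPoint hb0 hb1
  have := isProbabilityMeasure_twoPoint hc0 hc1
  have hdiff : ∀ A : Set (Fin 2),
      |(twoPoint b A).toReal - (twoPoint c A).toReal| ≤ |b - c| := by
    intro A
    rcases Fin.set_two_cases A with rfl | rfl | rfl | rfl
    · simp
    · simp [hb0, hc0]
    · rw [twoPoint_apply_one, twoPoint_apply_one, ENNReal.toReal_ofReal (by linarith),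
        ENNReal.toReal_ofReal (by linarith), show 1 - b - (1 - c) = -(b - c) by ring, abs_neg]
    · simp
  have hsup : ⨆ A : {A : Set (Fin 2) // MeasurableSet A},
      |(twoPoint b A.1).toReal - (twoPoint c A.1).toReal| = |b - c| := by
    refine le_antisymm (ciSup_le fun A ↦ hdiff A.1) ?_
    have hzero := le_ciSup ⟨|b - c|, by rintro _ ⟨A, rfl⟩; exact hdiff A.1⟩
      (⟨{0}, measurableSet_singleton 0⟩ : {A : Set (Fin 2) // MeasurableSet A})
    simpa [hb0, hc0] using hzero
  rw [dTV, hsup]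

def IsTruncatedSwapKernel (γ : ℝ) (P : Measure (Fin 2) → Kernel (Fin 2) (Fin 2)) : Prop :=
  ∀ ν : Measure (Fin 2), IsProbabilityMeasure ν → ∀ i : Fin 2,
    (((P ν) i {0}).toReal = max (min ((ν {1}).toReal) (1 - γ / 2)) (γ / 2)) ∧
    (((P ν) i {1}).toReal = max (min ((ν {0}).toReal) (1 - γ / 2)) (γ / 2))

lemma IsTruncatedSwapKernel.apply_twoPoint {γ : ℝ} {P : Measure (Fin 2) → Kernel (Fin 2) (Fin 2)}
    (hP : IsTruncatedSwapKernel γ P) (hγ0 : 0 < γ) [∀ μ, IsFiniteKernel (P μ)]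
    {b : ℝ} (hb1 : γ / 2 ≤ b) (hb2 : b ≤ 1 - γ / 2) (i : Fin 2) :
    P (twoPoint b) i = twoPoint (1 - b) := by
  have hb0 : 0 ≤ b := by linarith
  obtain ⟨h0, h1⟩ := hP _ (isProbabilityMeasure_twoPoint hb0 (by linarith)) i
  rw [twoPoint_apply_one, ENNReal.toReal_ofReal (by linarith), min_eq_left (by linarith),
    max_eq_left (by linarith)] at h0
  rw [twoPoint_apply_zero, ENNReal.toReal_ofReal hb0, min_eq_left (by linarith),
    max_eq_left (by linarith)] at h1
  refine Measure.ext_of_singleton (Fin.forall_fin_two.mpr ⟨?_, ?_⟩)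
  · rw [← ENNReal.ofReal_toReal (measure_ne_top _ _), h0, twoPoint_apply_zero]
  · rw [← ENNReal.ofReal_toReal (measure_ne_top _ _), h1, twoPoint_apply_one, sub_sub_cancel]

lemma IsTruncatedSwapKernel.bind_twoPoint {γ : ℝ} {P : Measure (Fin 2) → Kernel (Fin 2) (Fin 2)}
    (hP : IsTruncatedSwapKernel γ P) (hγ0 : 0 < γ) [∀ μ, IsFiniteKernel (P μ)]
    {b : ℝ} (hb1 : γ / 2 ≤ b) (hb2 : b ≤ 1 - γ / 2) :
    (twoPoint b).bind (P (twoPoint b)) = twoPoint (1 - b) :=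
  have := isProbabilityMeasure_twoPoint (b := b) (by linarith) (by linarith)
  Measure.bind_of_forall_eq (hP.apply_twoPoint hγ0 hb1 hb2)

lemma IsTruncatedSwapKernel.marginals_alternate {γ : ℝ}
    {P : Measure (Fin 2) → Kernel (Fin 2) (Fin 2)}
    (hP : IsTruncatedSwapKernel γ P) (hγ0 : 0 < γ) [∀ μ, IsFiniteKernel (P μ)]
    {a : ℝ} (ha1 : γ / 2 ≤ a) (ha2 : a ≤ 1 - γ / 2) {seq : ℕ → Measure (Fin 2)}
    (hseq0 : seq 0 = twoPoint a) (hseqS : ∀ n, seq (n + 1) = (seq n).bind (P (seq n))) (k : ℕ) :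
    seq (2 * k) = twoPoint a ∧ seq (2 * k + 1) = twoPoint (1 - a) := by
  have hodd : ∀ k, seq (2 * k) = twoPoint a → seq (2 * k + 1) = twoPoint (1 - a) := by
    intro k hk
    rw [hseqS, hk, hP.bind_twoPoint hγ0 ha1 ha2]
  induction k with
  | zero => exact ⟨hseq0, hodd 0 hseq0⟩
  | succ k ih =>
    have heven : seq (2 * (k + 1)) = twoPoint a := by
      rw [show 2 * (k + 1) = 2 * k + 1 + 1 by ring, hseqS, ih.2,
        hP.bind_twoPoint hγ0 (by linarith) (by linarith), sub_sub_cancel]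
    exact ⟨heven, hodd _ heven⟩

theorem stmt9_general (γ : ℝ) (hγ0 : 0 < γ)
    (P : Measure (Fin 2) → Kernel (Fin 2) (Fin 2)) (hMarkov : ∀ μ, IsMarkovKernel (P μ))
    (hPdef : ∀ ν : Measure (Fin 2), IsProbabilityMeasure ν → ∀ i : Fin 2,
      (((P ν) i {0}).toReal = max (min ((ν {1}).toReal) (1 - γ / 2)) (γ / 2)) ∧
      (((P ν) i {1}).toReal = max (min ((ν {0}).toReal) (1 - γ / 2)) (γ / 2)))
    (a : ℝ) (ha1 : γ / 2 ≤ a) (ha2 : a ≤ 1 - γ / 2)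
    (seq : ℕ → Measure (Fin 2))
    (hseq0 : seq 0 = ENNReal.ofReal a • Measure.dirac (0 : Fin 2)
      + ENNReal.ofReal (1 - a) • Measure.dirac (1 : Fin 2))
    (hseqS : ∀ n : ℕ, seq (n + 1) = (seq n).bind ⇑(P (seq n))) :
    (∀ n : ℕ, Even n → seq n = ENNReal.ofReal a • Measure.dirac (0 : Fin 2)
      + ENNReal.ofReal (1 - a) • Measure.dirac (1 : Fin 2)) ∧
    (∀ n : ℕ, Odd n → seq n = ENNReal.ofReal (1 - a) • Measure.dirac (0 : Fin 2)
      + ENNReal.ofReal a • Measure.dirac (1 : Fin 2)) ∧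
    (∀ n : ℕ, dTV (seq n)
      ((2 : ℝ≥0∞)⁻¹ • (Measure.dirac (0 : Fin 2) + Measure.dirac (1 : Fin 2)))
      = |2 * a - 1|) ∧
    (a ≠ 1 / 2 → ¬ Filter.Tendsto
      (fun n : ℕ => dTV (seq n)
        ((2 : ℝ≥0∞)⁻¹ • (Measure.dirac (0 : Fin 2) + Measure.dirac (1 : Fin 2))))
      Filter.atTop (nhds 0)) := by
  have hP : IsTruncatedSwapKernel γ P := hPdef
  have hseq := hP.marginals_alternate hγ0 ha1 ha2 hseq0 hseqS
  have heven : ∀ n, Even n → seq n = twoPoint a := by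
    rintro n ⟨k, rfl⟩
    rw [← two_mul]
    exact (hseq k).1
  have hodd : ∀ n, Odd n → seq n = twoPoint (1 - a) := by
    rintro n ⟨k, rfl⟩
    exact (hseq k).2
  have hdist : ∀ n, dTV (seq n)
      ((2 : ℝ≥0∞)⁻¹ • (Measure.dirac (0 : Fin 2) + Measure.dirac (1 : Fin 2))) = |2 * a - 1| := by
    intro n
    rw [← twoPoint_one_half]
    rcases Nat.even_or_odd n with hn | hn
    · rw [heven n hn, dTV_twoPoint_twoPoint (by linarith) (by linarith) (by norm_num) (by norm_num),
        ← abs_two, ← abs_mul]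
      congr 1; ring
    · rw [hodd n hn, dTV_twoPoint_twoPoint (by linarith) (by linarith) (by norm_num) (by norm_num),
        ← abs_two, ← abs_mul, ← abs_neg]
      congr 1; ring
  refine ⟨heven, fun n hn ↦ by rw [hodd n hn, twoPoint, sub_sub_cancel], hdist, fun ha ↦ ?_⟩
  simp_rw [hdist, tendsto_const_nhds_iff, abs_eq_zero, sub_eq_zero]
  contrapose! ha
  linarith

/-- The two-point example: on `E = {1,2}` (encoded as `Fin 2`, `0 ↔ 1`, `1 ↔ 2`), for the
kernel `P_ν(i,1) = (ν({2}) ∧ (1−γ/2)) ∨ (γ/2)`, `P_ν(i,2) = (ν({1}) ∧ (1−γ/2)) ∨ (γ/2)`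
and initial distribution `μ₀(a) = a δ₁ + (1−a) δ₂` with `a ∈ [γ/2, 1−γ/2]`, the marginals
oscillate: `μ_n = a δ₁ + (1−a) δ₂` for even `n`, `μ_n = (1−a) δ₁ + a δ₂` for odd `n`;
hence `d_TV(μ_n, π) = |2a − 1|` for all `n`, where `π = (δ₁+δ₂)/2`, and if `a ≠ 1/2`
then `μ_n` does not converge to `π` in total variation. -/
theorem stmt9 (γ : ℝ) (hγ0 : 0 < γ) (hγ1 : γ < 1)
    (P : Measure (Fin 2) → Kernel (Fin 2) (Fin 2)) (hMarkov : ∀ μ, IsMarkovKernel (P μ))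
    (hPdef : ∀ ν : Measure (Fin 2), IsProbabilityMeasure ν → ∀ i : Fin 2,
      (((P ν) i {0}).toReal = max (min ((ν {1}).toReal) (1 - γ / 2)) (γ / 2)) ∧
      (((P ν) i {1}).toReal = max (min ((ν {0}).toReal) (1 - γ / 2)) (γ / 2)))
    (a : ℝ) (ha1 : γ / 2 ≤ a) (ha2 : a ≤ 1 - γ / 2)
    (seq : ℕ → Measure (Fin 2))
    (hseq0 : seq 0 = ENNReal.ofReal a • Measure.dirac (0 : Fin 2)
      + ENNReal.ofReal (1 - a) • Measure.dirac (1 : Fin 2))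
    (hseqS : ∀ n : ℕ, seq (n + 1) = (seq n).bind ⇑(P (seq n))) :
    (∀ n : ℕ, Even n → seq n = ENNReal.ofReal a • Measure.dirac (0 : Fin 2)
      + ENNReal.ofReal (1 - a) • Measure.dirac (1 : Fin 2)) ∧
    (∀ n : ℕ, Odd n → seq n = ENNReal.ofReal (1 - a) • Measure.dirac (0 : Fin 2)
      + ENNReal.ofReal a • Measure.dirac (1 : Fin 2)) ∧
    (∀ n : ℕ, dTV (seq n)
      ((2 : ℝ≥0∞)⁻¹ • (Measure.dirac (0 : Fin 2) + Measure.dirac (1 : Fin 2)))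
      = |2 * a - 1|) ∧
    (a ≠ 1 / 2 → ¬ Filter.Tendsto
      (fun n : ℕ => dTV (seq n)
        ((2 : ℝ≥0∞)⁻¹ • (Measure.dirac (0 : Fin 2) + Measure.dirac (1 : Fin 2))))
      Filter.atTop (nhds 0)) :=
  stmt9_general γ hγ0 P hMarkov hPdef a ha1 ha2 seq hseq0 hseqS
end

section
/- Fix 0 < α < λ ≤ 1 and consider the nonlinear Markov chain on E = {1,2} with transition kernel P_ν(1,1) = ((1 − λν({2})) ∧ (1 − α/2)) ∨ (1 − λ + α/2), P_ν(1,2) = (λν({2}) ∧ (λ − α/2)) ∨ (α/2), P_ν(2,1) = (λν({1}) ∧ (λ − α/2)) ∨ (α/2), P_ν(2,2) = ((1 − λν({1})) ∧ (1 − α/2)) ∨ (1 − λ + α/2). Then for every a ∈ [α/(2λ), 1 − α/(2λ)], the measure μ(a) = a δ₁ + (1 − a) δ₂ is stationary: P_{μ(a)} μ(a) = μ(a). In particular this chain has a continuum of stationary measures. -/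
open MeasureTheory ProbabilityTheory
open scoped ENNReal

/-!
On a two-point space a measure is stationary as soon as the mass flowing from `1` to `2`
equals the mass flowing back (detailed balance). For `a` in the given range the clamps in
`P_{μ(a)}` are inactive, so `P(1,2) = λ(1 - a)` and `P(2,1) = λa`, and both fluxes equal
`λ a (1 - a)`.
-/

namespace MeasureTheory.Measure

variable {α β : Type*} [MeasurableSpace α] [MeasurableSpace β]
  [Countable α] [MeasurableSingletonClass α]

theorem bind_apply_eq_tsum (μ : Measure α) (κ : Kernel α β) {s : Set β}
    (hs : MeasurableSet s) : μ.bind κ s = ∑' i, μ {i} * κ i s := by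
  rw [bind_apply hs κ.measurable.aemeasurable, lintegral_countable']
  simp only [mul_comm]

theorem bind_eq_self_of_detailed_balance {μ : Measure α} {κ : Kernel α α} [IsMarkovKernel κ]
    (h : ∀ i j, μ {i} * κ i {j} = μ {j} * κ j {i}) : μ.bind κ = μ := by
  refine ext_of_singleton fun j => ?_
  have hmass : ∑' i, κ j {i} = 1 := by
    simpa [mul_comm] using (lintegral_countable' (μ := κ j) fun _ => 1).symm
  calc μ.bind κ {j} = ∑' i, μ {j} * κ j {i} := by
        rw [bind_apply_eq_tsum _ _ (measurableSet_singleton j)]; exact tsum_congr (h · j)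
    _ = μ {j} := by rw [ENNReal.tsum_mul_left, hmass, mul_one]

theorem bind_eq_self_of_flux_balance_fin_two {μ : Measure (Fin 2)} {κ : Kernel (Fin 2) (Fin 2)}
    [IsMarkovKernel κ] (h : μ {0} * κ 0 {1} = μ {1} * κ 1 {0}) : μ.bind κ = μ :=
  bind_eq_self_of_detailed_balance fun i j => by
    fin_cases i <;> fin_cases j <;> first | rfl | exact h | exact h.symm

end MeasureTheory.Measure

theorem isProbabilityMeasure_ofReal_smul_dirac_add {α : Type*} [MeasurableSpace α] (x y : α)
    {a : ℝ} (ha₀ : 0 ≤ a) (ha₁ : a ≤ 1) :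
    IsProbabilityMeasure
      (ENNReal.ofReal a • Measure.dirac x + ENNReal.ofReal (1 - a) • Measure.dirac y) :=
  ⟨by simp [← ENNReal.ofReal_add ha₀ (sub_nonneg.2 ha₁)]⟩

theorem stmt11_general (α lam : ℝ) (hα0 : 0 < α) (hαlam : α < lam)
    (P : Measure (Fin 2) → Kernel (Fin 2) (Fin 2)) (hMarkov : ∀ μ, IsMarkovKernel (P μ))
    (hPdef : ∀ ν : Measure (Fin 2), IsProbabilityMeasure ν →
      (((P ν) 0 {0}).toReal
          = max (min (1 - lam * (ν {1}).toReal) (1 - α / 2)) (1 - lam + α / 2)) ∧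
      (((P ν) 0 {1}).toReal
          = max (min (lam * (ν {1}).toReal) (lam - α / 2)) (α / 2)) ∧
      (((P ν) 1 {0}).toReal
          = max (min (lam * (ν {0}).toReal) (lam - α / 2)) (α / 2)) ∧
      (((P ν) 1 {1}).toReal
          = max (min (1 - lam * (ν {0}).toReal) (1 - α / 2)) (1 - lam + α / 2))) :
    ∀ a : ℝ, α / (2 * lam) ≤ a → a ≤ 1 - α / (2 * lam) →
      (ENNReal.ofReal a • Measure.dirac (0 : Fin 2)
          + ENNReal.ofReal (1 - a) • Measure.dirac (1 : Fin 2)).bind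
        ⇑(P (ENNReal.ofReal a • Measure.dirac (0 : Fin 2)
          + ENNReal.ofReal (1 - a) • Measure.dirac (1 : Fin 2)))
      = ENNReal.ofReal a • Measure.dirac (0 : Fin 2)
          + ENNReal.ofReal (1 - a) • Measure.dirac (1 : Fin 2) := by
  intro a ha₁ ha₂
  have hlam : 0 < lam := hα0.trans hαlam
  have hflow₀ : α / 2 ≤ lam * a := by
    rw [div_le_iff₀ (by positivity)] at ha₁; linarith
  have hflow₁ : α / 2 ≤ lam * (1 - a) := by
    rw [le_sub_comm, div_le_iff₀ (by positivity)] at ha₂; linarith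
  have ha₀ : 0 ≤ a := nonneg_of_mul_nonneg_right (by linarith) hlam
  have hb₀ : 0 ≤ 1 - a := nonneg_of_mul_nonneg_right (by linarith) hlam
  set μ := ENNReal.ofReal a • Measure.dirac (0 : Fin 2)
    + ENNReal.ofReal (1 - a) • Measure.dirac (1 : Fin 2)
  have hμ₀ : μ {0} = ENNReal.ofReal a := by simp [μ]
  have hμ₁ : μ {1} = ENNReal.ofReal (1 - a) := by simp [μ]
  obtain ⟨-, h₀₁, h₁₀, -⟩ :=
    hPdef μ (isProbabilityMeasure_ofReal_smul_dirac_add 0 1 ha₀ (by linarith))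
  rw [hμ₁, ENNReal.toReal_ofReal hb₀, min_eq_left (by linarith), max_eq_left hflow₁] at h₀₁
  rw [hμ₀, ENNReal.toReal_ofReal ha₀, min_eq_left (by linarith), max_eq_left hflow₀] at h₁₀
  have := hMarkov μ
  refine Measure.bind_eq_self_of_flux_balance_fin_two ?_
  rw [hμ₀, hμ₁, ← ENNReal.ofReal_toReal (measure_ne_top (P μ 0) {1}),
    ← ENNReal.ofReal_toReal (measure_ne_top (P μ 1) {0}), h₀₁, h₁₀,
    ← ENNReal.ofReal_mul ha₀, ← ENNReal.ofReal_mul hb₀]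
  congr 1
  ring

/-- The two-point counterexample kernel (states `{1,2}` encoded as `Fin 2`, `0 ↔ 1`,
`1 ↔ 2`), for `0 < α < lam ≤ 1`: every measure `μ(a) = a δ₁ + (1−a) δ₂` with
`a ∈ [α/(2 lam), 1 − α/(2 lam)]` is stationary, so the chain has a continuum of
stationary measures. -/
theorem stmt11 (α lam : ℝ) (hα0 : 0 < α) (hαlam : α < lam) (hlam1 : lam ≤ 1)
    (P : Measure (Fin 2) → Kernel (Fin 2) (Fin 2)) (hMarkov : ∀ μ, IsMarkovKernel (P μ))
    (hPdef : ∀ ν : Measure (Fin 2), IsProbabilityMeasure ν →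
      (((P ν) 0 {0}).toReal
          = max (min (1 - lam * (ν {1}).toReal) (1 - α / 2)) (1 - lam + α / 2)) ∧
      (((P ν) 0 {1}).toReal
          = max (min (lam * (ν {1}).toReal) (lam - α / 2)) (α / 2)) ∧
      (((P ν) 1 {0}).toReal
          = max (min (lam * (ν {0}).toReal) (lam - α / 2)) (α / 2)) ∧
      (((P ν) 1 {1}).toReal
          = max (min (1 - lam * (ν {0}).toReal) (1 - α / 2)) (1 - lam + α / 2))) :
    ∀ a : ℝ, α / (2 * lam) ≤ a → a ≤ 1 - α / (2 * lam) →
      (ENNReal.ofReal a • Measure.dirac (0 : Fin 2)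
          + ENNReal.ofReal (1 - a) • Measure.dirac (1 : Fin 2)).bind
        ⇑(P (ENNReal.ofReal a • Measure.dirac (0 : Fin 2)
          + ENNReal.ofReal (1 - a) • Measure.dirac (1 : Fin 2)))
      = ENNReal.ofReal a • Measure.dirac (0 : Fin 2)
          + ENNReal.ofReal (1 - a) • Measure.dirac (1 : Fin 2) :=
  stmt11_general α lam hα0 hαlam P hMarkov hPdef
end

section
/- Fix 0 < α < λ ≤ 1. For ν ∈ 𝒫(ℕ) (probability measures on the positive integers) define, for i,j ∈ ℕ: P_ν(i,1) = (λ ν({1})) ∨ α, and for j ≠ 1, P_ν(i,j) = ((λ ν({1,…,j}) − α) ∧ λ ν({j})) ∨ 0 + (1 − λ)·𝟙(j = i + 1). Then for every ν ∈ 𝒫(ℕ) and every i ∈ ℕ, the numbers P_ν(i,j) are nonnegative and Σ_{j=1}^∞ P_ν(i,j) = 1, i.e. P_ν is a well-defined Markov transition kernel on ℕ. -/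
/-!
Write `G(j) = (λ ν({1,…,j})) ∨ α`. Away from the shift term `(1 − λ)·𝟙(j = i + 1)`, the kernel
is the increment `G(j) − G(j − 1)` (with `P_ν(i,1) = G(1)`), because
`((a + b − α) ∧ b) ∨ 0 = ((a + b) ∨ α) − (a ∨ α)` for `b ≥ 0`. These increments are nonnegative
and telescope to `lim G = λ ∨ α = λ`, and the shift term contributes the remaining `1 − λ`.
-/

/-- The transition probabilities of the counterexample nonlinear Markov chain on the
positive integers `ℕ+`: `P_ν(i,1) = (λ ν({1})) ∨ α` and, for `j ≠ 1`,
`P_ν(i,j) = ((λ ν({1,…,j}) − α) ∧ λ ν({j})) ∨ 0 + (1−λ)·𝟙(j = i+1)`. -/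
noncomputable def pker (α lam : ℝ) (ν : ℕ+ → ℝ) (i j : ℕ+) : ℝ :=
  if j = 1 then max (lam * ν 1) α
  else max (min (lam * ∑ k ∈ Finset.Iic j, ν k - α) (lam * ν j)) 0
    + (if j = i + 1 then 1 - lam else 0)

open Finset Filter Topology


lemma max_min_sub_eq_max_sub_max (α a : ℝ) {b : ℝ} (hb : 0 ≤ b) :
    max (min (a + b - α) b) 0 = max (a + b) α - max a α := by
  rcases le_total α a with h | h <;> rcases le_total (a + b - α) b with h2 | h2 <;>
    rcases le_total (a + b) α with h3 | h3 <;>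
  simp [*] <;> linarith

theorem Finset.sum_Iic_add_one {α M : Type*} [LinearOrder α] [One α] [LocallyFiniteOrderBot α]
    [Add α] [SuccAddOrder α] [NoMaxOrder α] [AddCommMonoid M] (f : α → M) (a : α) :
    ∑ b ∈ Iic (a + 1), f b = ∑ b ∈ Iic a, f b + f (a + 1) := by
  rw [← Iio_insert, sum_insert notMem_Iio_self, Iio_add_one_eq_Iic, add_comm]

theorem hasSum_of_tendsto_sum_Iic {α : Type*} [Preorder α] [LocallyFiniteOrderBot α]
    [IsDirectedOrder α] [Nonempty α] {f : α → ℝ} {L : ℝ} (hf : ∀ a, 0 ≤ f a)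
    (hL : Tendsto (fun a ↦ ∑ b ∈ Iic a, f b) atTop (𝓝 L)) : HasSum f L := by
  have hmono : Monotone fun a ↦ ∑ b ∈ Iic a, f b := fun a a' h ↦
    sum_le_sum_of_subset_of_nonneg (Iic_subset_Iic.2 h) fun b _ _ ↦ hf b
  have hsum : Summable f := summable_of_sum_le hf fun s ↦ by
    obtain ⟨a, ha⟩ := s.exists_le
    calc ∑ b ∈ s, f b ≤ ∑ b ∈ Iic a, f b :=
          sum_le_sum_of_subset_of_nonneg (fun b hb ↦ mem_Iic.2 (ha b hb)) fun b _ _ ↦ hf b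
      _ ≤ L := hmono.ge_of_tendsto hL a
  rw [← tendsto_nhds_unique (hsum.hasSum.comp tendsto_finset_Iic_atTop_atTop) hL]
  exact hsum.hasSum

section Kernel

variable (α lam : ℝ) (ν : ℕ+ → ℝ)

noncomputable def flooredCdf (j : ℕ+) : ℝ := max (lam * ∑ k ∈ Iic j, ν k) α

noncomputable def flooredCdfIncr (j : ℕ+) : ℝ :=
  if j = 1 then max (lam * ν 1) α
  else max (min (lam * ∑ k ∈ Iic j, ν k - α) (lam * ν j)) 0

lemma pker_eq_flooredCdfIncr_add (i j : ℕ+) :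
    pker α lam ν i j = flooredCdfIncr α lam ν j + if j = i + 1 then 1 - lam else 0 := by
  have hi : i + 1 ≠ 1 := (PNat.lt_add_left 1 i).ne'
  unfold pker flooredCdfIncr
  split_ifs <;> simp_all

variable {α lam ν}

lemma flooredCdfIncr_nonneg (hα : 0 ≤ α) (j : ℕ+) : 0 ≤ flooredCdfIncr α lam ν j := by
  unfold flooredCdfIncr
  split_ifs
  exacts [hα.trans (le_max_right _ _), le_max_right _ _]

lemma sum_Iic_flooredCdfIncr (hlam : 0 ≤ lam) (hν0 : ∀ k, 0 ≤ ν k) (J : ℕ+) :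
    ∑ j ∈ Iic J, flooredCdfIncr α lam ν j = flooredCdf α lam ν J := by
  induction J using PNat.recOn with
  | one => simp [flooredCdfIncr, flooredCdf, ← PNat.bot_eq_one]
  | succ J ih =>
    have hJ : J + 1 ≠ 1 := (PNat.lt_add_left 1 J).ne'
    rw [sum_Iic_add_one, ih, flooredCdfIncr, if_neg hJ, flooredCdf, flooredCdf, sum_Iic_add_one,
      mul_add, max_min_sub_eq_max_sub_max α _ (mul_nonneg hlam (hν0 _))]
    ring

lemma tendsto_flooredCdf (hν : HasSum ν 1) :
    Tendsto (flooredCdf α lam ν) atTop (𝓝 (max lam α)) := by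
  have h := ((hν.comp tendsto_finset_Iic_atTop_atTop).const_mul lam).max
    (tendsto_const_nhds (x := α))
  rwa [mul_one] at h

lemma pker_nonneg (hα : 0 ≤ α) (hlam : lam ≤ 1) (i j : ℕ+) : 0 ≤ pker α lam ν i j := by
  rw [pker_eq_flooredCdfIncr_add]
  refine add_nonneg (flooredCdfIncr_nonneg hα j) ?_
  split_ifs <;> linarith

lemma hasSum_pker (hα : 0 ≤ α) (hαlam : α ≤ lam) (hν0 : ∀ k, 0 ≤ ν k) (hν : HasSum ν 1)
    (i : ℕ+) : HasSum (pker α lam ν i) 1 := by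
  have hincr : HasSum (flooredCdfIncr α lam ν) lam := by
    refine hasSum_of_tendsto_sum_Iic (flooredCdfIncr_nonneg hα) ?_
    simp_rw [sum_Iic_flooredCdfIncr (hα.trans hαlam) hν0]
    simpa only [max_eq_left hαlam] using tendsto_flooredCdf (α := α) (lam := lam) hν
  have := hincr.add (hasSum_ite_eq (i + 1) (1 - lam))
  rwa [add_sub_cancel, ← funext (pker_eq_flooredCdfIncr_add α lam ν i)] at this

end Kernel

/-- For `0 < α < lam ≤ 1` and any probability mass function `ν` on `ℕ+`, the numbers
`P_ν(i,j)` are nonnegative and each row sums to `1`, i.e. `P_ν` is a well-defined Markov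
transition kernel on the positive integers. -/
theorem stmt12 (α lam : ℝ) (hα0 : 0 < α) (hαlam : α < lam) (hlam1 : lam ≤ 1)
    (ν : ℕ+ → ℝ) (hν0 : ∀ k, 0 ≤ ν k) (hνsum : Summable ν) (hν1 : ∑' k, ν k = 1) :
    (∀ i j : ℕ+, 0 ≤ pker α lam ν i j) ∧ (∀ i : ℕ+, ∑' j, pker α lam ν i j = 1) :=
  ⟨pker_nonneg hα0.le hlam1, fun i ↦
    (hasSum_pker hα0.le hαlam.le hν0 (hν1 ▸ hνsum.hasSum) i).tsum_eq⟩
end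

section
/- Fix 0 < α < λ ≤ 1 and consider the nonlinear Markov transition kernel on ℕ defined by P_ν(i,1) = (λ ν({1})) ∨ α and, for j ≠ 1, P_ν(i,j) = ((λ ν({1,…,j}) − α) ∧ λ ν({j})) ∨ 0 + (1 − λ)·𝟙(j = i + 1). Then for every i ∈ ℕ and all μ, ν ∈ 𝒫(ℕ), Σ_{j=1}^∞ |P_ν(i,j) − P_μ(i,j)| ≤ λ Σ_{j=1}^∞ |μ({j}) − ν({j})|, i.e. the family satisfies the measure-Lipschitz condition with constant λ. -/
open Finset

def hinge (α x : ℝ) : ℝ := max (x - α) 0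

theorem abs_hinge_sub_hinge_le (α x y : ℝ) : |hinge α x - hinge α y| ≤ |x - y| :=
  (abs_max_sub_max_le_abs _ _ _).trans_eq (by rw [sub_sub_sub_cancel_right])

theorem hinge_sub_hinge_of_le (α : ℝ) {x y : ℝ} (h : y ≤ x) :
    hinge α x - hinge α y = max (min (x - α) (x - y)) 0 := by
  unfold hinge
  rcases min_cases (x - α) (x - y) with ⟨e, hm⟩ | ⟨e, hm⟩ <;> rw [e] <;>
  rcases max_cases (x - α) 0 with ⟨e1, h1⟩ | ⟨e1, h1⟩ <;>
  rcases max_cases (y - α) 0 with ⟨e2, h2⟩ | ⟨e2, h2⟩ <;>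
  rcases max_cases (x - y) 0 with ⟨e3, h3⟩ | ⟨e3, h3⟩ <;>
  linarith

theorem max_eq_add_hinge (α x : ℝ) : max x α = α + hinge α x := by
  rw [hinge, ← max_add_add_left, add_sub_cancel, add_zero]

theorem abs_hinge_step_le (α : ℝ) {a a' b b' : ℝ} (ha : a ≤ a') (hb : b ≤ b') :
    |(hinge α b' - hinge α b) - (hinge α a' - hinge α a)|
        + (|b' - a'| - |hinge α b' - hinge α a'|)
      ≤ |(b' - b) - (a' - a)| + (|b - a| - |hinge α b - hinge α a|) := by
  have := le_abs_self (hinge α b' - hinge α a')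
  have := neg_abs_le (hinge α b' - hinge α a')
  have := le_abs_self ((b' - b) - (a' - a))
  have := neg_abs_le ((b' - b) - (a' - a))
  have := le_abs_self (b - a)
  have := neg_abs_le (b - a)
  rcases abs_cases ((hinge α b' - hinge α b) - (hinge α a' - hinge α a)) with
    ⟨e5, -⟩ | ⟨e5, -⟩ <;>
  rcases abs_cases (b' - a') with ⟨e6, -⟩ | ⟨e6, -⟩ <;>
  rcases abs_cases (hinge α b - hinge α a) with ⟨e7, -⟩ | ⟨e7, -⟩ <;>
  rw [e5, e6, e7] <;>
  unfold hinge at * <;>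
  rcases max_cases (a - α) 0 with ⟨e1, h1⟩ | ⟨e1, h1⟩ <;>
  rcases max_cases (a' - α) 0 with ⟨e2, h2⟩ | ⟨e2, h2⟩ <;>
  rcases max_cases (b - α) 0 with ⟨e3, h3⟩ | ⟨e3, h3⟩ <;>
  rcases max_cases (b' - α) 0 with ⟨e4, h4⟩ | ⟨e4, h4⟩ <;>
  linarith

theorem sum_range_abs_hinge_variation_le (α : ℝ) {a b : ℕ → ℝ} (ha : Monotone a)
    (hb : Monotone b) (h0 : a 0 = b 0) (N : ℕ) :
    ∑ n ∈ range N,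
        |(hinge α (b (n + 1)) - hinge α (b n)) - (hinge α (a (n + 1)) - hinge α (a n))|
      ≤ ∑ n ∈ range N, |(b (n + 1) - b n) - (a (n + 1) - a n)| := by
  have potential : ∀ N,
      ∑ n ∈ range N,
          |(hinge α (b (n + 1)) - hinge α (b n)) - (hinge α (a (n + 1)) - hinge α (a n))|
        + (|b N - a N| - |hinge α (b N) - hinge α (a N)|)
      ≤ ∑ n ∈ range N, |(b (n + 1) - b n) - (a (n + 1) - a n)| := by
    intro N
    induction N with
    | zero => simp [h0]
    | succ N ih =>
      rw [sum_range_succ, sum_range_succ]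
      linarith [abs_hinge_step_le α (ha N.le_succ) (hb N.le_succ)]
  linarith [potential N, abs_hinge_sub_hinge_le α (b N) (a N)]

def cdf (ν : ℕ+ → ℝ) (n : ℕ) : ℝ := ∑ k ∈ range n, ν k.succPNat

theorem cdf_zero (ν : ℕ+ → ℝ) : cdf ν 0 = 0 := sum_range_zero _

theorem cdf_succ (ν : ℕ+ → ℝ) (n : ℕ) : cdf ν (n + 1) = cdf ν n + ν n.succPNat :=
  sum_range_succ _ _

theorem mul_cdf_succ_sub (c : ℝ) (ν : ℕ+ → ℝ) (n : ℕ) :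
    c * cdf ν (n + 1) - c * cdf ν n = c * ν n.succPNat := by
  rw [cdf_succ, mul_add, add_sub_cancel_left]

theorem monotone_cdf {ν : ℕ+ → ℝ} (hν : ∀ k, 0 ≤ ν k) : Monotone (cdf ν) :=
  monotone_nat_of_le_succ fun n => by simp [cdf_succ, hν]

theorem sum_Iic_succPNat (ν : ℕ+ → ℝ) (n : ℕ) :
    ∑ k ∈ Iic n.succPNat, ν k = cdf ν (n + 1) := by
  refine sum_nbij' PNat.natPred Nat.succPNat (fun k hk => ?_) (fun k hk => ?_)
    (fun k _ => k.succPNat_natPred) (fun k _ => Nat.natPred_succPNat k)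
    (fun k _ => by rw [k.succPNat_natPred])
  · rw [mem_Iic, ← PNat.natPred_le_natPred, Nat.natPred_succPNat] at hk
    exact mem_range.2 (Nat.lt_succ_of_le hk)
  · exact mem_Iic.2 (Nat.succPNat_le_succPNat.2 (Nat.le_of_lt_succ (mem_range.1 hk)))

theorem pker_sub_pker_succPNat {α lam : ℝ} (hlam : 0 ≤ lam) {μ ν : ℕ+ → ℝ}
    (hμ : ∀ k, 0 ≤ μ k) (hν : ∀ k, 0 ≤ ν k) (i : ℕ+) (n : ℕ) :
    pker α lam ν i n.succPNat - pker α lam μ i n.succPNat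
      = (hinge α (lam * cdf ν (n + 1)) - hinge α (lam * cdf ν n))
        - (hinge α (lam * cdf μ (n + 1)) - hinge α (lam * cdf μ n)) := by
  rcases n with _ | n
  · have h1 : Nat.succPNat 0 = 1 := rfl
    simp only [pker, h1, if_true, max_eq_add_hinge, cdf_succ, cdf_zero, zero_add, mul_zero]
    ring
  · have hj : (n + 1).succPNat ≠ 1 := fun h => by simpa using congrArg PNat.val h
    have step : ∀ ρ : ℕ+ → ℝ, (∀ k, 0 ≤ ρ k) →
        max (min (lam * ∑ k ∈ Iic (n + 1).succPNat, ρ k - α) (lam * ρ (n + 1).succPNat)) 0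
          = hinge α (lam * cdf ρ (n + 2)) - hinge α (lam * cdf ρ (n + 1)) := by
      intro ρ hρ
      have hle := mul_le_mul_of_nonneg_left (monotone_cdf hρ (n + 1).le_succ) hlam
      rw [hinge_sub_hinge_of_le α hle, sum_Iic_succPNat, mul_cdf_succ_sub]
    simp only [pker, if_neg hj, step ν hν, step μ hμ]
    ring

theorem stmt14_general (α lam : ℝ) (hα0 : 0 < α) (hαlam : α < lam)
    (μ ν : ℕ+ → ℝ) (hμ0 : ∀ k, 0 ≤ μ k) (hμs : Summable μ)
    (hν0 : ∀ k, 0 ≤ ν k) (hνs : Summable ν) :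
    ∀ i : ℕ+, ∑' j, |pker α lam ν i j - pker α lam μ i j| ≤ lam * ∑' j, |μ j - ν j| := by
  intro i
  have hlam : 0 ≤ lam := by linarith
  rw [← Equiv.pnatEquivNat.symm.tsum_eq, ← Equiv.pnatEquivNat.symm.tsum_eq]
  simp only [Equiv.pnatEquivNat_symm_apply, pker_sub_pker_succPNat hlam hμ0 hν0]
  refine Real.tsum_le_of_sum_range_le (fun _ => abs_nonneg _) fun N => ?_
  calc _ ≤ ∑ n ∈ range N,
          |(lam * cdf ν (n + 1) - lam * cdf ν n) - (lam * cdf μ (n + 1) - lam * cdf μ n)| :=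
        sum_range_abs_hinge_variation_le α ((monotone_cdf hμ0).const_mul hlam)
          ((monotone_cdf hν0).const_mul hlam) (by simp [cdf_zero]) N
    _ = lam * ∑ n ∈ range N, |μ n.succPNat - ν n.succPNat| := by
        simp only [mul_cdf_succ_sub]
        simp only [← mul_sub, abs_mul, abs_of_nonneg hlam, abs_sub_comm, mul_sum]
    _ ≤ lam * ∑' n : ℕ, |μ n.succPNat - ν n.succPNat| :=
        mul_le_mul_of_nonneg_left (((hμs.sub hνs).abs.comp_injective
          Equiv.pnatEquivNat.symm.injective).sum_le_tsum _ fun _ _ => abs_nonneg _) hlam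

/-- For `0 < α < lam ≤ 1`, the counterexample kernel on `ℕ+` satisfies the
measure-Lipschitz condition with constant `lam`:
`Σ_j |P_ν(i,j) − P_μ(i,j)| ≤ lam Σ_j |μ({j}) − ν({j})|`. -/
theorem stmt14 (α lam : ℝ) (hα0 : 0 < α) (hαlam : α < lam) (hlam1 : lam ≤ 1)
    (μ ν : ℕ+ → ℝ) (hμ0 : ∀ k, 0 ≤ μ k) (hμs : Summable μ) (hμ1 : ∑' k, μ k = 1)
    (hν0 : ∀ k, 0 ≤ ν k) (hνs : Summable ν) (hν1 : ∑' k, ν k = 1) :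
    ∀ i : ℕ+, ∑' j, |pker α lam ν i j - pker α lam μ i j| ≤ lam * ∑' j, |μ j - ν j| :=
  stmt14_general α lam hα0 hαlam μ ν hμ0 hμs hν0 hνs
end

section
/- Let μ and ν be probability measures on a measurable space (E,ℰ) and let c ≥ 0. Suppose that ν(A)² ≤ e^c μ(A) and μ(A)² ≤ e^c ν(A) for every A ∈ ℰ. Then |μ(A) − ν(A)| ≤ 1 − min(e^{−c}, 1/2) for every A ∈ ℰ, and consequently d_TV(μ,ν) ≤ 2 − 2 min(e^{−c}, 1/2). -/
/-!
Applying the hypothesis to `A` and to `Aᶜ` gives `ν(A) ≥ a μ(A)²` and `1 - ν(A) ≥ a (1 - μ(A))²`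
with `a = e^{-c}`, so each of `μ(A) - ν(A)` and `ν(A) - μ(A)` is at most `t - a t²` for some
`t ≤ 1`. Elementary calculus bounds `t - a t²` by `1 - a` when `a ≤ 1/2` and by `1/(4a) ≤ 1/2`
otherwise.
-/

open MeasureTheory

lemma sub_mul_sq_le_one_sub_min {a t : ℝ} (ha : 0 ≤ a) (ht : t ≤ 1) :
    t - a * t ^ 2 ≤ 1 - min a (1 / 2) := by
  rcases le_total a (1 / 2) with h | h
  · rw [min_eq_left h]
    -- `1 - a - (t - a t²) = (1 - t) (1 - a (1 + t))`
    nlinarith [mul_nonneg (sub_nonneg.2 ht) (sub_nonneg.2 ht)]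
  · rw [min_eq_right h]
    nlinarith [sq_nonneg (2 * a * t - 1)]

lemma abs_measureReal_sub_le_one_sub_min {E : Type*} [MeasurableSpace E] {μ ν : Measure E}
    [IsProbabilityMeasure μ] [IsProbabilityMeasure ν] {a : ℝ} (ha : 0 ≤ a)
    (h : ∀ A : Set E, MeasurableSet A → a * μ.real A ^ 2 ≤ ν.real A)
    {A : Set E} (hA : MeasurableSet A) :
    |μ.real A - ν.real A| ≤ 1 - min a (1 / 2) := by
  have hcompl := h Aᶜ hA.compl
  rw [probReal_compl_eq_one_sub hA, probReal_compl_eq_one_sub hA] at hcompl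
  have hle : μ.real A ≤ 1 := measureReal_le_one
  rw [abs_sub_le_iff]
  constructor
  · linarith [h A hA, sub_mul_sq_le_one_sub_min ha hle]
  · have hle' : 1 - μ.real A ≤ 1 := by linarith [measureReal_nonneg (μ := μ) (s := A)]
    linarith [sub_mul_sq_le_one_sub_min ha hle']

lemma dTV_le_two_mul {E : Type*} [MeasurableSpace E] {μ ν : Measure E} {b : ℝ} (hb : 0 ≤ b)
    (h : ∀ A : Set E, MeasurableSet A → |(μ A).toReal - (ν A).toReal| ≤ b) :
    dTV μ ν ≤ 2 * b := by
  unfold dTV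
  gcongr
  exact Real.iSup_le (fun A => h A.1 A.2) hb

theorem stmt18_general {E : Type*} [MeasurableSpace E]
    (μ ν : Measure E) (hμ : IsProbabilityMeasure μ) (hν : IsProbabilityMeasure ν)
    (c : ℝ)
    (h2 : ∀ A : Set E, MeasurableSet A → ((μ A).toReal) ^ 2 ≤ Real.exp c * (ν A).toReal) :
    (∀ A : Set E, MeasurableSet A →
      |(μ A).toReal - (ν A).toReal| ≤ 1 - min (Real.exp (-c)) (1 / 2)) ∧
    dTV μ ν ≤ 2 - 2 * min (Real.exp (-c)) (1 / 2) := by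
  have hlower : ∀ A : Set E, MeasurableSet A → Real.exp (-c) * μ.real A ^ 2 ≤ ν.real A := by
    intro A hA
    rw [Real.exp_neg, inv_mul_le_iff₀ (Real.exp_pos c)]
    exact h2 A hA
  have hset : ∀ A : Set E, MeasurableSet A →
      |(μ A).toReal - (ν A).toReal| ≤ 1 - min (Real.exp (-c)) (1 / 2) :=
    fun A hA => abs_measureReal_sub_le_one_sub_min (Real.exp_pos (-c)).le hlower hA
  have hbound_nonneg : 0 ≤ 1 - min (Real.exp (-c)) (1 / 2) := by
    linarith [min_le_right (Real.exp (-c)) (1 / 2)]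
  refine ⟨hset, ?_⟩
  linarith [dTV_le_two_mul hbound_nonneg hset]

/-- From a two-sided Harnack-type inequality `ν(A)² ≤ e^c μ(A)`, `μ(A)² ≤ e^c ν(A)` one
deduces `|μ(A) − ν(A)| ≤ 1 − min(e^{−c}, 1/2)` for every measurable `A`, and hence
`d_TV(μ,ν) ≤ 2 − 2 min(e^{−c}, 1/2)`. -/
theorem stmt18 {E : Type*} [MeasurableSpace E]
    (μ ν : Measure E) (hμ : IsProbabilityMeasure μ) (hν : IsProbabilityMeasure ν)
    (c : ℝ) (hc : 0 ≤ c)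
    (h1 : ∀ A : Set E, MeasurableSet A → ((ν A).toReal) ^ 2 ≤ Real.exp c * (μ A).toReal)
    (h2 : ∀ A : Set E, MeasurableSet A → ((μ A).toReal) ^ 2 ≤ Real.exp c * (ν A).toReal) :
    (∀ A : Set E, MeasurableSet A →
      |(μ A).toReal - (ν A).toReal| ≤ 1 - min (Real.exp (-c)) (1 / 2)) ∧
    dTV μ ν ≤ 2 - 2 * min (Real.exp (-c)) (1 / 2) :=
  stmt18_general μ ν hμ hν c h2
end
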